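/- Let φ: V → W be a surjective linear map between finite-dimensional real vector spaces and L_V ⊆ V ⊕ V* a maximal isotropic subspace. Then the forward image φ*L_V = {(φ(Y), α) : (Y, φᵀα) ∈ L_V} is maximal isotropic in W ⊕ W*, i.e., it has dimension dim W. -/

import Mathlib

/-!
Write the forward image as `f (g⁻¹ L)` with `g = id × φᵀ` injective and `f = φ × id`.
For `N = ker φ` and `S = N × 0`, the range of `g` is `V × ann N = S^⊥` and `g` maps `ker f`
onto `S`, so `dim φ_* L = dim (L ∩ S^⊥) - dim (L ∩ S)`. Since `L` is Lagrangian,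
`L ∩ S^⊥ = (L + S)^⊥`, and counting dimensions gives
`dim (L ∩ S^⊥) - dim (L ∩ S) = dim L - dim S = dim V - dim N = dim W`.
-/

open Module Submodule LinearMap

namespace Submodule

variable {K M M₂ M₃ : Type*} [DivisionRing K] [AddCommGroup M] [Module K M]
  [AddCommGroup M₂] [Module K M₂] [AddCommGroup M₃] [Module K M₃]

theorem finrank_map_of_injective {g : M →ₗ[K] M₂} (hg : Function.Injective g)
    (p : Submodule K M) : finrank K (p.map g) = finrank K p :=
  (equivMapOfInjective g hg p).finrank_eq.symm

theorem finrank_prod_bot (p : Submodule K M) :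
    finrank K (p.prod (⊥ : Submodule K M₂)) = finrank K p := by
  rw [prod_eq_sup_map, Submodule.map_bot, sup_bot_eq, finrank_map_of_injective inl_injective]

theorem finrank_map_add_finrank_inf_ker [FiniteDimensional K M] (f : M →ₗ[K] M₂)
    (p : Submodule K M) : finrank K (p.map f) + finrank K (p ⊓ ker f : Submodule K M) =
      finrank K p := by
  have h := finrank_range_add_finrank_ker (f ∘ₗ p.subtype)
  rw [range_comp, range_subtype, ker_comp] at h
  rw [← h, ← finrank_map_subtype_eq p (comap p.subtype (ker f)), map_comap_subtype]

theorem finrank_map_comap_add_finrank_inf_map_ker [FiniteDimensional K M₃]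
    {g : M →ₗ[K] M₃} (hg : Function.Injective g) (f : M →ₗ[K] M₂) (L : Submodule K M₃) :
    finrank K ((L.comap g).map f) + finrank K (L ⊓ (ker f).map g : Submodule K M₃) =
      finrank K (L ⊓ range g : Submodule K M₃) := by
  have := FiniteDimensional.of_injective g hg
  have hker : L ⊓ (ker f).map g = (comap g L ⊓ ker f).map g := by
    rw [inf_comm, map_inf_eq_map_inf_comap, inf_comm]
  rw [inf_comm L (range g), ← map_comap_eq, hker, finrank_map_of_injective hg,
    finrank_map_of_injective hg, finrank_map_add_finrank_inf_ker]

end Submodule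

namespace LinearMap.BilinForm

theorem orthogonal_sup {R M : Type*} [CommSemiring R] [AddCommMonoid M] [Module R M]
    (B : LinearMap.BilinForm R M) (p q : Submodule R M) :
    B.orthogonal (p ⊔ q) = B.orthogonal p ⊓ B.orthogonal q := by
  refine le_antisymm (le_inf (orthogonal_le le_sup_left) (orthogonal_le le_sup_right)) ?_
  rintro x ⟨hp, hq⟩ n hn
  obtain ⟨y, hy, z, hz, rfl⟩ := mem_sup.mp hn
  rw [map_add, LinearMap.add_apply, hp y hy, hq z hz, add_zero]

variable {K E : Type*} [Field K] [AddCommGroup E] [Module K E] [FiniteDimensional K E]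
  {B : LinearMap.BilinForm K E}

theorem orthogonal_eq_self_of_le_of_two_mul_finrank (hB : B.Nondegenerate) {L : Submodule K E}
    (hiso : L ≤ B.orthogonal L) (hdim : 2 * finrank K L = finrank K E) :
    B.orthogonal L = L :=
  (eq_of_le_of_finrank_le hiso (by rw [finrank_orthogonal hB]; omega)).symm

theorem finrank_inf_orthogonal_add_finrank (hB : B.Nondegenerate) {L : Submodule K E}
    (hL : B.orthogonal L = L) (S : Submodule K E) :
    finrank K (L ⊓ B.orthogonal S : Submodule K E) + finrank K S =
      finrank K L + finrank K (L ⊓ S : Submodule K E) := by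
  have hinf : L ⊓ B.orthogonal S = B.orthogonal (L ⊔ S) := by rw [orthogonal_sup, hL]
  have hLdim := finrank_orthogonal hB L
  rw [hL] at hLdim
  have := finrank_orthogonal hB (L ⊔ S)
  have := finrank_sup_add_finrank_inf_eq L S
  have := (L ⊔ S).finrank_le
  rw [hinf]
  omega

end LinearMap.BilinForm

noncomputable def courantPairing (R V : Type*) [CommRing R] [AddCommGroup V] [Module R V] :
    LinearMap.BilinForm R (V × Dual R V) :=
  mk₂ R (fun x y => y.2 x.1 + x.2 y.1)
    (fun x x' y => by simp only [Prod.fst_add, Prod.snd_add, map_add, LinearMap.add_apply]; ring)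
    (fun c x y => by simp [mul_add])
    (fun x y y' => by simp only [Prod.fst_add, Prod.snd_add, map_add, LinearMap.add_apply]; ring)
    (fun c x y => by simp [mul_add])

section courantPairing

variable (R V : Type*) [CommRing R] [AddCommGroup V] [Module R V]

@[simp]
theorem courantPairing_apply (x y : V × Dual R V) :
    courantPairing R V x y = y.2 x.1 + x.2 y.1 := rfl

theorem courantPairing_isRefl : (courantPairing R V).IsRefl := fun x y h => by
  rwa [courantPairing_apply, add_comm, ← courantPairing_apply]

theorem courantPairing_nondegenerate [Projective R V] : (courantPairing R V).Nondegenerate := by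
  refine (courantPairing_isRefl R V).nondegenerate_iff_separatingLeft.mpr fun x hx => ?_
  refine Prod.ext ?_ ?_
  · refine (forall_dual_apply_eq_zero_iff R x.1).mp fun β => ?_
    simpa using hx (0, β)
  · ext Y
    simpa using hx (Y, 0)

theorem courantPairing_orthogonal_prod_bot (N : Submodule R V) :
    (courantPairing R V).orthogonal (N.prod ⊥) = (⊤ : Submodule R V).prod N.dualAnnihilator := by
  ext ⟨X, α⟩
  simp only [BilinForm.mem_orthogonal_iff, mem_prod, mem_top, true_and,
    mem_dualAnnihilator, mem_bot, courantPairing_apply, Prod.forall]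
  constructor
  · intro h Y hY
    simpa using h Y 0 ⟨hY, rfl⟩
  · rintro h Y β ⟨hY, rfl⟩
    simp [h Y hY]

end courantPairing

theorem stmt_8_general (V W : Type*) [AddCommGroup V] [Module ℝ V] [FiniteDimensional ℝ V]
    [AddCommGroup W] [Module ℝ W]
    (φ : V →ₗ[ℝ] W) (hsurj : Function.Surjective φ)
    (LV : Submodule ℝ (V × Module.Dual ℝ V))
    (hiso : ∀ a ∈ LV, ∀ b ∈ LV, b.2 a.1 + a.2 b.1 = 0)
    (hdim : Module.finrank ℝ LV = Module.finrank ℝ V) :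
    Module.finrank ℝ
      (Submodule.map
        (LinearMap.prodMap φ (LinearMap.id : Module.Dual ℝ W →ₗ[ℝ] Module.Dual ℝ W))
        (Submodule.comap
          (LinearMap.prodMap (LinearMap.id : V →ₗ[ℝ] V) φ.dualMap) LV))
      = Module.finrank ℝ W := by
  set B := courantPairing ℝ V
  set S : Submodule ℝ (V × Dual ℝ V) := (ker φ).prod ⊥
  set g := (id : V →ₗ[ℝ] V).prodMap φ.dualMap
  set f := φ.prodMap (id : Dual ℝ W →ₗ[ℝ] Dual ℝ W)
  have hB : B.Nondegenerate := courantPairing_nondegenerate ℝ V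
  have hLagrangian : B.orthogonal LV = LV :=
    BilinForm.orthogonal_eq_self_of_le_of_two_mul_finrank hB
      (fun x hx => (BilinForm.mem_orthogonal_iff).mpr fun a ha => hiso a ha x hx)
      (by rw [finrank_prod, Subspace.dual_finrank_eq, hdim]; ring)
  have hrange : range g = B.orthogonal S := by
    rw [range_prodMap, range_id, range_dualMap_eq_dualAnnihilator_ker,
      courantPairing_orthogonal_prod_bot]
  have hker : (ker f).map g = S := by
    rw [ker_prodMap, ker_id, prodMap_map_prod, map_id, Submodule.map_bot]
  have hinj : Function.Injective g :=
    Function.Injective.prodMap (fun _ _ h => h) (dualMap_injective_of_surjective hsurj)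
  have hcount := finrank_map_comap_add_finrank_inf_map_ker hinj f LV
  rw [hrange, hker] at hcount
  have hLS := BilinForm.finrank_inf_orthogonal_add_finrank hB hLagrangian S
  have hS : finrank ℝ S = finrank ℝ (ker φ) := finrank_prod_bot (ker φ)
  have hrank := finrank_range_add_finrank_ker φ
  rw [range_eq_top.mpr hsurj, finrank_top] at hrank
  omega

/-- The forward image of a maximal isotropic subspace `L_V ⊆ V ⊕ V*` under a
surjective linear map `φ : V → W` is maximal isotropic in `W ⊕ W*`:
it has dimension `dim W`. -/
theorem stmt_8 (V W : Type*) [AddCommGroup V] [Module ℝ V] [FiniteDimensional ℝ V]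
    [AddCommGroup W] [Module ℝ W] [FiniteDimensional ℝ W]
    (φ : V →ₗ[ℝ] W) (hsurj : Function.Surjective φ)
    (LV : Submodule ℝ (V × Module.Dual ℝ V))
    (hiso : ∀ a ∈ LV, ∀ b ∈ LV, b.2 a.1 + a.2 b.1 = 0)
    (hdim : Module.finrank ℝ LV = Module.finrank ℝ V) :
    Module.finrank ℝ
      (Submodule.map
        (LinearMap.prodMap φ (LinearMap.id : Module.Dual ℝ W →ₗ[ℝ] Module.Dual ℝ W))
        (Submodule.comap
          (LinearMap.prodMap (LinearMap.id : V →ₗ[ℝ] V) φ.dualMap) LV))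
      = Module.finrank ℝ W :=
  stmt_8_general V W φ hsurj LV hiso hdim
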